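/- arXiv:2210.12982 — 8 statements merged into one kernel-verified Lean document; each statement's English description precedes it below -/
import Mathlib

section
/- For a regular Markoff triple (e, g, f), define the coweights by r_e² = −1 + s_e·e, r_f² = −1 + s_f·f, r_g² = −1 + s_g·g. Then under right mutation E = 3fg − e the new coweight satisfies s_E = 3f·s_g − s_e. -/
/-!
The weights satisfy the cross identity `e·r_g - g·r_e = f`: both `(e·r_g - f)/g` and `r_e`
lie in `[0, e)` and `g` times either is `≡ -f (mod e)`, while `g` is a unit mod `e` because
the entries of a Markoff triple are pairwise coprime (Vieta descent). With `E = 3fg - e`,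
the cross identity gives `g·(3f·r_g - r_e) - f = E·r_g` with `3f·r_g - r_e ∈ [0, E)`, so
`r_E = 3f·r_g - r_e`. Squaring the cross identity gives `e·s_g + g·s_e = 3f + 2·r_e·r_g`,
and with it `r_E² + 1 = (3f·s_g - s_e)·E`.
-/

lemma eq_of_isCoprime_of_dvd_mul_sub {n g a b : ℤ} (hng : IsCoprime n g)
    (ha0 : 0 ≤ a) (ha : a < n) (hb0 : 0 ≤ b) (hb : b < n) (hdvd : n ∣ g * (a - b)) :
    a = b := by
  have hab : a - b = 0 := Int.eq_zero_of_abs_lt_dvd (hng.dvd_of_dvd_mul_left hdvd)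
    (abs_sub_lt_iff.mpr ⟨by omega, by omega⟩)
  omega

lemma markoff_sq_add_sq_lt_sq {a b c : ℤ} (ha : 0 < a) (hb : 0 < b) (hac : a ≤ c)
    (hbc : b ≤ c) (hc : 1 < c) (h : a ^ 2 + b ^ 2 + c ^ 2 = 3 * a * b * c) :
    a ^ 2 + b ^ 2 < c ^ 2 := by
  by_contra! hge
  have hab : 3 * a * b ≤ 2 * (a + b) := by nlinarith
  have ha2 : a ≤ 2 := by nlinarith
  have hb2 : b ≤ 2 := by nlinarith
  have hc2 : c ≤ 2 := by nlinarith
  interval_cases a <;> interval_cases b <;> interval_cases c <;> omega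

lemma markoff_isUnit_of_dvd {a b c d : ℤ} (ha : 0 < a) (hb : 0 < b) (hc : 0 < c)
    (h : a ^ 2 + b ^ 2 + c ^ 2 = 3 * a * b * c) (hda : d ∣ a) (hdb : d ∣ b) (hdc : d ∣ c) :
    IsUnit d := by
  induction hn : (a + b + c).toNat using Nat.strong_induction_on generalizing a b c with
  | _ n ih =>
  wlog hmax : a ≤ c ∧ b ≤ c generalizing a b c
  · rcases le_total a b with hab | hba
    · exact this hc ha hb (by linear_combination h) hdc hda hdb (by omega) (by omega)
    · exact this hb hc ha (by linear_combination h) hdb hdc hda (by omega) (by omega)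
  rcases eq_or_lt_of_le (show 1 ≤ c by omega) with hc1 | hc1
  · exact isUnit_of_dvd_one (hc1 ▸ hdc)
  have hjump : c * (3 * a * b - c) = a ^ 2 + b ^ 2 := by linear_combination -h
  have hpos : 0 < 3 * a * b - c := pos_of_mul_pos_right (hjump ▸ by positivity) hc.le
  have hlt : 3 * a * b - c < c := by
    refine lt_of_mul_lt_mul_left ?_ hc.le
    rw [hjump, ← sq]
    exact markoff_sq_add_sq_lt_sq ha hb hmax.1 hmax.2 hc1 h
  exact ih _ (by omega) ha hb hpos (by linear_combination h) hda hdb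
    (dvd_sub ((hda.mul_left 3).mul_right b) hdc) rfl

lemma markoff_isCoprime {a b c : ℤ} (ha : 0 < a) (hb : 0 < b) (hc : 0 < c)
    (h : a ^ 2 + b ^ 2 + c ^ 2 = 3 * a * b * c) : IsCoprime a b := by
  rw [Int.isCoprime_iff_gcd_eq_one]
  have hda : (a.gcd b : ℤ) ∣ a := Int.gcd_dvd_left a b
  have hdb : (a.gcd b : ℤ) ∣ b := Int.gcd_dvd_right a b
  have hdc2 : (a.gcd b : ℤ) ^ 2 ∣ c ^ 2 := by
    rw [show c ^ 2 = 3 * c * (a * b) - a ^ 2 - b ^ 2 by linear_combination h]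
    exact dvd_sub (dvd_sub (dvd_mul_of_dvd_right (sq (a.gcd b : ℤ) ▸ mul_dvd_mul hda hdb) _)
      (pow_dvd_pow_of_dvd hda 2)) (pow_dvd_pow_of_dvd hdb 2)
  have hunit := markoff_isUnit_of_dvd ha hb hc h hda hdb ((Int.pow_dvd_pow_iff two_ne_zero).mp hdc2)
  exact_mod_cast Int.isUnit_iff_natAbs_eq.mp hunit

lemma weight_cross_identity {e g f r_e r_g : ℤ} (he : 0 < e) (hf : 0 < f) (hfg : f < g)
    (hcop : IsCoprime e g) (hre0 : 0 ≤ r_e) (hre1 : r_e < e) (hre : e ∣ f * r_e - g)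
    (hse : e ∣ r_e ^ 2 + 1) (hrg0 : 0 ≤ r_g) (hrg1 : r_g < g) (hrg : g ∣ e * r_g - f) :
    e * r_g - g * r_e = f := by
  obtain ⟨k, hk⟩ := hrg
  have hk0 : 0 ≤ k := by nlinarith
  have hke : k < e := by nlinarith
  have hf_add : e ∣ f + g * r_e := by
    rw [show f + g * r_e = f * (r_e ^ 2 + 1) - r_e * (f * r_e - g) by ring]
    exact dvd_sub (dvd_mul_of_dvd_right hse f) (dvd_mul_of_dvd_right hre r_e)
  have hkr : k = r_e := eq_of_isCoprime_of_dvd_mul_sub hcop hk0 hke hre0 hre1 <| by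
    rw [show g * (k - r_e) = e * r_g - (f + g * r_e) by linear_combination -hk]
    exact dvd_sub (dvd_mul_right e r_g) hf_add
  linear_combination hk + g * hkr

lemma weight_mutation {e g f r_e r_g r_E : ℤ} (he : 0 < e) (hf : 0 < f) (heg : e < g)
    (hcop : IsCoprime e g) (hrg0 : 0 ≤ r_g) (hrg1 : r_g < g) (hcross : e * r_g - g * r_e = f)
    (hrE0 : 0 ≤ r_E) (hrE1 : r_E < 3 * f * g - e) (hrE : 3 * f * g - e ∣ g * r_E - f) :
    r_E = 3 * f * r_g - r_e := by
  have hfE : f < 3 * f * g - e := by nlinarith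
  have hjump : g * (3 * f * r_g - r_e) - f = (3 * f * g - e) * r_g := by
    linear_combination hcross
  have hcopE : IsCoprime (3 * f * g - e) g := by
    simpa [sub_eq_neg_add] using hcop.neg_left.add_mul_right_left (3 * f)
  refine eq_of_isCoprime_of_dvd_mul_sub hcopE hrE0 hrE1 (by nlinarith) (by nlinarith) ?_
  rw [show g * (r_E - (3 * f * r_g - r_e)) = (g * r_E - f) - (3 * f * g - e) * r_g by
    linear_combination -hjump]
  exact dvd_sub hrE (dvd_mul_right _ _)

lemma coweight_cross_identity {e g f r_e r_g s_e s_g : ℤ} (he : 0 < e) (hg : 0 < g)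
    (h : e ^ 2 + f ^ 2 + g ^ 2 = 3 * e * f * g) (hse : r_e ^ 2 = -1 + s_e * e)
    (hsg : r_g ^ 2 = -1 + s_g * g) (hcross : e * r_g - g * r_e = f) :
    e * s_g + g * s_e = 3 * f + 2 * r_e * r_g := by
  refine mul_left_cancel₀ (mul_pos he hg).ne' ?_
  linear_combination (e * r_g - g * r_e + f) * hcross + h - e ^ 2 * hsg - g ^ 2 * hse

theorem markoff_coweight_mutation_general (e g f r_e r_g s_e s_g E r_E s_E : ℤ)
    (he : 0 < e) (hf : 0 < f) (heg : e < g) (hfg : f < g)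
    (h : e ^ 2 + f ^ 2 + g ^ 2 = 3 * e * f * g)
    (hre0 : 0 ≤ r_e) (hre1 : r_e < e) (hre : e ∣ f * r_e - g)
    (hrg0 : 0 ≤ r_g) (hrg1 : r_g < g) (hrg : g ∣ e * r_g - f)
    (hse : r_e ^ 2 = -1 + s_e * e)
    (hsg : r_g ^ 2 = -1 + s_g * g)
    (hE : E = 3 * f * g - e)
    (hrE0 : 0 ≤ r_E) (hrE1 : r_E < E) (hrE : E ∣ g * r_E - f)
    (hsE : r_E ^ 2 = -1 + s_E * E) :
    s_E = 3 * f * s_g - s_e := by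
  subst hE
  have hg : 0 < g := he.trans heg
  have hcop : IsCoprime e g := markoff_isCoprime he hg hf (by linear_combination h)
  have hcross : e * r_g - g * r_e = f :=
    weight_cross_identity he hf hfg hcop hre0 hre1 hre ⟨s_e, by linear_combination hse⟩
      hrg0 hrg1 hrg
  have hrE_eq : r_E = 3 * f * r_g - r_e :=
    weight_mutation he hf heg hcop hrg0 hrg1 hcross hrE0 hrE1 hrE
  have hcow := coweight_cross_identity he hg h hse hsg hcross
  refine mul_right_cancel₀ (show 3 * f * g - e ≠ 0 by nlinarith) ?_
  rw [hrE_eq] at hsE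
  linear_combination -hsE + 9 * f ^ 2 * hsg + hse + 3 * f * hcow

/-- Mutation rule for the coweights of a regular Markoff triple: for the right
mutation `E = 3fg - e`, the coweights (defined by `r² = -1 + s·n`) satisfy
`s_E = 3f*s_g - s_e`. -/
theorem markoff_coweight_mutation (e g f r_e r_g r_f s_e s_g s_f E r_E s_E : ℤ)
    (he : 0 < e) (hf : 0 < f) (heg : e < g) (hfg : f < g) (hef : e ≠ f)
    (h : e ^ 2 + f ^ 2 + g ^ 2 = 3 * e * f * g)
    (hre0 : 0 ≤ r_e) (hre1 : r_e < e) (hre : e ∣ f * r_e - g)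
    (hrf0 : 0 ≤ r_f) (hrf1 : r_f < f) (hrf : f ∣ g * r_f - e)
    (hrg0 : 0 ≤ r_g) (hrg1 : r_g < g) (hrg : g ∣ e * r_g - f)
    (hse : r_e ^ 2 = -1 + s_e * e)
    (hsf : r_f ^ 2 = -1 + s_f * f)
    (hsg : r_g ^ 2 = -1 + s_g * g)
    (hE : E = 3 * f * g - e)
    (hrE0 : 0 ≤ r_E) (hrE1 : r_E < E) (hrE : E ∣ g * r_E - f)
    (hsE : r_E ^ 2 = -1 + s_E * E) :
    s_E = 3 * f * s_g - s_e :=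
  markoff_coweight_mutation_general e g f r_e r_g s_e s_g E r_E s_E he hf heg hfg h hre0 hre1 hre
    hrg0 hrg1 hrg hse hsg hE hrE0 hrE1 hrE hsE
end

section
/- For every regular Markoff triple (e, g, f), writing Δ_x = 9x² − 4 and Δ_{e,f} = (e·√(Δ_f) + f·√(Δ_e))/2, one has Δ_{e,f} − ef/g < g < Δ_{e,f}; in particular g = ⌊Δ_{e,f}⌋. -/
open Real in
set_option maxHeartbeats 1600000 in
/-- For every regular Markoff triple `(e, g, f)`, with
`Δ_{e,f} = (e·√(9f²-4) + f·√(9e²-4))/2`, one has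
`Δ_{e,f} - ef/g < g < Δ_{e,f}`; in particular `g = ⌊Δ_{e,f}⌋`. -/
theorem markoff_delta_bounds (e g f : ℤ)
    (he : 0 < e) (hf : 0 < f) (heg : e < g) (hfg : f < g) (hef : e ≠ f)
    (h : e ^ 2 + f ^ 2 + g ^ 2 = 3 * e * f * g) :
    ((e : ℝ) * Real.sqrt (9 * (f : ℝ) ^ 2 - 4) + (f : ℝ) * Real.sqrt (9 * (e : ℝ) ^ 2 - 4)) / 2
        - (e : ℝ) * f / g < (g : ℝ) ∧
    (g : ℝ) <
      ((e : ℝ) * Real.sqrt (9 * (f : ℝ) ^ 2 - 4) + (f : ℝ) * Real.sqrt (9 * (e : ℝ) ^ 2 - 4)) / 2 ∧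
    ⌊((e : ℝ) * Real.sqrt (9 * (f : ℝ) ^ 2 - 4) + (f : ℝ) * Real.sqrt (9 * (e : ℝ) ^ 2 - 4)) / 2⌋
      = g := by
  -- integer facts
  have hkey : 3 * e * f + 1 ≤ 2 * g := by
    rcases lt_or_gt_of_ne hef with h1 | h1
    · have hq : (g - f) * (g + f - 3 * e * f) = 3 * e * f ^ 2 - e ^ 2 - 2 * f ^ 2 := by
        linear_combination h
      nlinarith [mul_pos he hf, sq_nonneg (e - f)]
    · have hq : (g - e) * (g + e - 3 * e * f) = 3 * e ^ 2 * f - f ^ 2 - 2 * e ^ 2 := by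
        linear_combination h
      nlinarith [mul_pos he hf, sq_nonneg (e - f)]
  have hefg : e * f + 1 ≤ g := by nlinarith [mul_pos he hf]
  have hD : (2 * g - 3 * e * f) ^ 2 = 9 * e ^ 2 * f ^ 2 - 4 * e ^ 2 - 4 * f ^ 2 := by
    linear_combination 4 * h
  -- real casts
  have hE : (1 : ℝ) ≤ (e : ℝ) := by exact_mod_cast he
  have hF : (1 : ℝ) ≤ (f : ℝ) := by exact_mod_cast hf
  have hG : (0 : ℝ) < (g : ℝ) := by exact_mod_cast lt_trans he heg
  have hEpos : (0 : ℝ) < (e : ℝ) := by linarith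
  have hFpos : (0 : ℝ) < (f : ℝ) := by linarith
  set S : ℝ := 2 * (g : ℝ) - 3 * e * f with hS_def
  have hS1 : (1 : ℝ) ≤ S := by
    have : ((3 * e * f + 1 : ℤ) : ℝ) ≤ ((2 * g : ℤ) : ℝ) := by exact_mod_cast hkey
    push_cast at this; simp only [hS_def]; linarith
  have hSD : S ^ 2 = 9 * (e:ℝ) ^ 2 * f ^ 2 - 4 * e ^ 2 - 4 * f ^ 2 := by
    have h' : ((2 * g - 3 * e * f : ℤ) : ℝ) ^ 2
        = ((9 * e ^ 2 * f ^ 2 - 4 * e ^ 2 - 4 * f ^ 2 : ℤ) : ℝ) := by exact_mod_cast hD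
    push_cast at h'; simp only [hS_def]; linarith
  -- sqrt facts
  set a : ℝ := Real.sqrt (9 * (e : ℝ) ^ 2 - 4) with ha_def
  set b : ℝ := Real.sqrt (9 * (f : ℝ) ^ 2 - 4) with hb_def
  have hea : (0:ℝ) ≤ 9 * (e : ℝ) ^ 2 - 4 := by nlinarith
  have hfb : (0:ℝ) ≤ 9 * (f : ℝ) ^ 2 - 4 := by nlinarith
  have ha0 : 0 ≤ a := Real.sqrt_nonneg _
  have hb0 : 0 ≤ b := Real.sqrt_nonneg _
  have ha2 : a ^ 2 = 9 * (e : ℝ) ^ 2 - 4 := Real.sq_sqrt hea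
  have hb2 : b ^ 2 = 9 * (f : ℝ) ^ 2 - 4 := Real.sq_sqrt hfb
  have hQ2 : (a * b) ^ 2 = 9 * S ^ 2 + 16 := by
    have : (a * b) ^ 2 = a ^ 2 * b ^ 2 := by ring
    rw [this, ha2, hb2, hSD]; ring
  have hQ0 : 0 ≤ a * b := mul_nonneg ha0 hb0
  have hQlo : 3 * S < a * b := by nlinarith
  have hQhi : a * b < 3 * S + 4 := by nlinarith
  -- lower bound: 2g < e*b + f*a
  have hmain_lo : 2 * (g : ℝ) < (e : ℝ) * b + (f : ℝ) * a := by
    have hsum0 : (0:ℝ) ≤ (e : ℝ) * b + (f : ℝ) * a := by positivity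
    have hsq : (2 * (g : ℝ)) ^ 2 < ((e : ℝ) * b + (f : ℝ) * a) ^ 2 := by
      have h2g : 2 * (g : ℝ) = 3 * e * f + S := by simp only [hS_def]; ring
      have hexp : ((e : ℝ) * b + (f : ℝ) * a) ^ 2
          = 18 * (e:ℝ)^2 * f^2 - 4*e^2 - 4*f^2 + 2 * e * f * (a * b) := by
        have : ((e : ℝ) * b + (f : ℝ) * a) ^ 2
            = (e:ℝ)^2 * b^2 + (f:ℝ)^2 * a^2 + 2 * e * f * (a * b) := by ring
        rw [this, ha2, hb2]; ring
      rw [hexp, h2g]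
      nlinarith [hSD, mul_pos (mul_pos hEpos hFpos) (sub_pos.2 hQlo)]
    exact lt_of_pow_lt_pow_left₀ 2 hsum0 hsq
  -- upper bound: g * (e*b + f*a) < 2*g^2 + 2*e*f
  have hmain_hi : (g:ℝ) * ((e : ℝ) * b + (f : ℝ) * a) < 2 * (g:ℝ)^2 + 2 * e * f := by
    have hX0 : (0:ℝ) ≤ (g:ℝ) * ((e : ℝ) * b + (f : ℝ) * a) := by positivity
    have hsq : ((g:ℝ) * ((e : ℝ) * b + (f : ℝ) * a)) ^ 2 < (2 * (g:ℝ)^2 + 2 * e * f) ^ 2 := by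
      have h2g : 2 * (g : ℝ) = 3 * e * f + S := by simp only [hS_def]; ring
      have hexp : ((e : ℝ) * b + (f : ℝ) * a) ^ 2
          = S^2 + 9 * (e:ℝ)^2 * f^2 + 2 * e * f * (a * b) := by
        have : ((e : ℝ) * b + (f : ℝ) * a) ^ 2
            = (e:ℝ)^2 * b^2 + (f:ℝ)^2 * a^2 + 2 * e * f * (a * b) := by ring
        rw [this, ha2, hb2, hSD]; ring
      have key : (2 * (g:ℝ)^2 + 2 * e * f) ^ 2 - ((g:ℝ) * ((e : ℝ) * b + (f : ℝ) * a)) ^ 2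
          = 2 * e * f * (g:ℝ)^2 * (3 * S + 4 - a * b) + 4 * (e:ℝ)^2 * f^2 := by
        have : ((g:ℝ) * ((e : ℝ) * b + (f : ℝ) * a)) ^ 2
            = (g:ℝ)^2 * ((e : ℝ) * b + (f : ℝ) * a) ^ 2 := by ring
        rw [this, hexp]
        linear_combination ((g:ℝ)^2 * (2*(g:ℝ) + 3*(e:ℝ)*f + S)) * h2g
      have hfac : (0:ℝ) < 2 * e * f * (g:ℝ)^2 * (3 * S + 4 - a * b) := by
        have h1 : (0:ℝ) < 3 * S + 4 - a * b := by linarith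
        have h2 : (0:ℝ) < 2 * (e:ℝ) * f * (g:ℝ)^2 := by positivity
        exact mul_pos h2 h1
      have hfac2 : (0:ℝ) < 4 * (e:ℝ)^2 * f^2 := by positivity
      linarith [key]
    have hY0 : (0:ℝ) ≤ 2 * (g:ℝ)^2 + 2 * e * f := by positivity
    exact lt_of_pow_lt_pow_left₀ 2 hY0 hsq
  have hGne : (g:ℝ) ≠ 0 := ne_of_gt hG
  set Δ : ℝ := ((e : ℝ) * b + (f : ℝ) * a) / 2 with hΔ_def
  have hlo : (g:ℝ) < Δ := by simp only [hΔ_def]; linarith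
  have hhi : Δ < (g:ℝ) + (e:ℝ) * f / (g:ℝ) := by
    have hrw : (g:ℝ) + (e:ℝ) * f / (g:ℝ) = (2 * (g:ℝ)^2 + 2 * e * f) / (2 * g) := by
      field_simp
    rw [hΔ_def, hrw, div_lt_div_iff₀ two_pos (by positivity)]
    nlinarith [hmain_hi, hG]
  have hefg' : (e:ℝ) * f / (g:ℝ) < 1 := by
    rw [div_lt_one hG]
    have : ((e * f + 1 : ℤ) : ℝ) ≤ (g:ℝ) := by exact_mod_cast hefg
    push_cast at this; linarith
  refine ⟨by linarith, hlo, ?_⟩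
  rw [Int.floor_eq_iff]
  constructor
  · exact_mod_cast le_of_lt hlo
  · linarith
end

section
/- For every regular Markoff triple (e, g, f), one has Δ_{e,f} < g + 2/(9ef), where Δ_{e,f} = (e·√(9f² − 4) + f·√(9e² − 4))/2. -/
set_option maxHeartbeats 800000


/-- For every regular Markoff triple `(e, g, f)`:
`Δ_{e,f} < g + 2/(9ef)`, where `Δ_{e,f} = (e·√(9f²-4) + f·√(9e²-4))/2`. -/
theorem markoff_delta_upper (e g f : ℤ)
    (he : 0 < e) (hf : 0 < f) (heg : e < g) (hfg : f < g) (hef : e ≠ f)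
    (h : e ^ 2 + f ^ 2 + g ^ 2 = 3 * e * f * g) :
    ((e : ℝ) * Real.sqrt (9 * (f : ℝ) ^ 2 - 4) + (f : ℝ) * Real.sqrt (9 * (e : ℝ) ^ 2 - 4)) / 2
      < (g : ℝ) + 2 / (9 * (e : ℝ) * f) := by
  have hef2 : (2:ℤ) ≤ e * f := by
    rcases lt_or_gt_of_ne hef with h1 | h1
    · nlinarith
    · nlinarith
  have hL2 : e^2 + f^2 ≤ g^2 := by
    by_contra hc
    push_neg at hc
    rcases lt_or_gt_of_ne hef with hlt | hgt
    · have h1 : 3*e*f*g < 4*(f*g) := by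
        nlinarith [mul_pos (sub_pos.mpr hlt) (by linarith : (0:ℤ) < f + e),
          mul_pos hf (sub_pos.mpr hfg)]
      have h2 : (0:ℤ) < f*g := mul_pos hf (by linarith)
      have h3 : e = 1 := by nlinarith
      nlinarith
    · have h1 : 3*e*f*g < 4*(e*g) := by
        nlinarith [mul_pos (sub_pos.mpr hgt) (by linarith : (0:ℤ) < e + f),
          mul_pos he (sub_pos.mpr heg)]
      have h2 : (0:ℤ) < e*g := mul_pos he (by linarith)
      have h3 : f = 1 := by nlinarith
      nlinarith
  have hE1 : (1:ℝ) ≤ (e:ℝ) := by exact_mod_cast he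
  have hF1 : (1:ℝ) ≤ (f:ℝ) := by exact_mod_cast hf
  have hGE : (e:ℝ) < (g:ℝ) := by exact_mod_cast heg
  have hG0 : (0:ℝ) < (g:ℝ) := by linarith
  have hR : (e:ℝ)^2 + (f:ℝ)^2 + (g:ℝ)^2 = 3*(e:ℝ)*(f:ℝ)*(g:ℝ) := by exact_mod_cast h
  have hp2 : (2:ℝ) ≤ (e:ℝ)*(f:ℝ) := by exact_mod_cast hef2
  have hL2R : (e:ℝ)^2 + (f:ℝ)^2 ≤ (g:ℝ)^2 := by exact_mod_cast hL2
  set E := (e:ℝ) with hE_def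
  set F := (f:ℝ) with hF_def
  set G := (g:ℝ) with hG_def
  set s : ℝ := 2*G - 3*E*F with hs_def
  have hsq : s^2 = 9*E^2*F^2 - 4*E^2 - 4*F^2 := by
    rw [hs_def]; linear_combination (4:ℝ)*hR
  have hs0 : 0 ≤ s := by
    by_contra hcon
    push_neg at hcon
    nlinarith [mul_pos hG0 (by linarith : (0:ℝ) < -s), hR, hL2R]
  have huv1 : E^2 + F^2 ≤ E^2*F^2 + 1 := by
    nlinarith [mul_nonneg (by nlinarith : (0:ℝ) ≤ E^2-1) (by nlinarith : (0:ℝ) ≤ F^2-1)]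
  have hs2p : 2*(E*F) ≤ s := by
    by_contra hcon
    push_neg at hcon
    nlinarith [hsq, huv1, hp2, mul_self_lt_mul_self hs0 hcon]
  have hs4 : (4:ℝ) ≤ s := by nlinarith
  have hGs : G*s = G^2 - E^2 - F^2 := by
    rw [hs_def]; linear_combination hR
  have hGsq : 3*E^2*F^2 ≤ G*s := by
    have h2gs : 2*(G*s) = 3*(E*F)*s + s^2 := by rw [hs_def]; ring
    have h3 : 3*(E*F)*(2*(E*F)) ≤ 3*(E*F)*s :=
      mul_le_mul_of_nonneg_left hs2p (by nlinarith : (0:ℝ) ≤ 3*(E*F))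
    nlinarith [sq_nonneg s]
  have hF4 : (0:ℝ) ≤ 9*F^2 - 4 := by nlinarith
  have hE4 : (0:ℝ) ≤ 9*E^2 - 4 := by nlinarith
  set u := Real.sqrt (9*F^2 - 4) with hu_def
  set v := Real.sqrt (9*E^2 - 4) with hv_def
  have hu0 : 0 ≤ u := Real.sqrt_nonneg _
  have hv0 : 0 ≤ v := Real.sqrt_nonneg _
  have hu2 : u^2 = 9*F^2 - 4 := Real.sq_sqrt hF4
  have hv2 : v^2 = 9*E^2 - 4 := Real.sq_sqrt hE4
  set w := Real.sqrt (9*s^2 + 16) with hw_def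
  have hw0 : 0 ≤ w := Real.sqrt_nonneg _
  have hw2 : w^2 = 9*s^2 + 16 := Real.sq_sqrt (by positivity)
  have huvw : u * v = w := by
    have h9 : (9*F^2-4)*(9*E^2-4) = 9*s^2+16 := by linear_combination (-9:ℝ)*hsq
    rw [hw_def, ← h9, hu_def, hv_def]
    exact (Real.sqrt_mul hF4 _).symm
  have hw3s : 3*s < w := by
    by_contra hcon
    push_neg at hcon
    nlinarith [hw2, mul_le_mul hcon hcon hw0 (by linarith : (0:ℝ) ≤ 3*s)]
  have hkey : 3*s*w < 9*s^2 + 8 := by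
    nlinarith [hw2, mul_pos (sub_pos.mpr hw3s) (sub_pos.mpr hw3s)]
  have hs3 : (0:ℝ) < 3*s := by linarith
  have hEF0 : (0:ℝ) < 9*E*F := by linarith [hp2]
  have hwt : w < 3*s + 8/(3*s) := by
    have h1 : w - 3*s < 8/(3*s) := by
      rw [lt_div_iff₀ hs3]; nlinarith [hkey]
    linarith
  have h5 : 2*E*F*(8/(3*s)) ≤ 4*G*(4/(9*E*F)) := by
    have e1 : 2*E*F*(8/(3*s)) = (16*(E*F))/(3*s) := by ring
    have e2 : 4*G*(4/(9*E*F)) = (16*G)/(9*E*F) := by ring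
    rw [e1, e2, div_le_div_iff₀ hs3 hEF0]
    nlinarith [hGsq]
  have hA0 : 0 ≤ E*u + F*v :=
    add_nonneg (mul_nonneg (by linarith) hu0) (mul_nonneg (by linarith) hv0)
  have hk0 : (0:ℝ) < 4/(9*E*F) := div_pos (by norm_num) hEF0
  have hB0 : (0:ℝ) < 2*G + 4/(9*E*F) := by linarith
  have hP : (E*u + F*v)^2 < (2*G + 4/(9*E*F))^2 := by
    have expand : (E*u+F*v)^2 = E^2*(9*F^2-4) + F^2*(9*E^2-4) + 2*E*F*w := by
      calc (E*u+F*v)^2 = E^2*u^2 + F^2*v^2 + 2*E*F*(u*v) := by ring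
        _ = E^2*(9*F^2-4) + F^2*(9*E^2-4) + 2*E*F*w := by rw [hu2, hv2, huvw]
    have hEF2' : (0:ℝ) < 2*E*F := by linarith [hp2]
    have hwle : (2*E*F)*w < (2*E*F)*(3*s + 8/(3*s)) :=
      mul_lt_mul_of_pos_left hwt hEF2'
    have expand2 : E^2*(9*F^2-4) + F^2*(9*E^2-4) + 2*E*F*(3*s + 8/(3*s))
        = 4*G^2 + 2*E*F*(8/(3*s)) := by
      rw [hs_def]; linear_combination (-4:ℝ)*hR
    have expand3 : (2*G + 4/(9*E*F))^2 = 4*G^2 + 4*G*(4/(9*E*F)) + (4/(9*E*F))^2 := by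
      ring
    have hk2 : (0:ℝ) < (4/(9*E*F))^2 := pow_pos hk0 2
    rw [expand]
    linarith [hwle, h5, expand2, expand3, hk2]
  have hfinal : E*u + F*v < 2*G + 4/(9*E*F) :=
    lt_of_pow_lt_pow_left₀ 2 (le_of_lt hB0) hP
  have hhalf : 2/(9*E*F) = (4/(9*E*F))/2 := by ring
  linarith [hfinal]
end

section
/- For every regular Markoff triple (e, g, f), one has g + 2ef/(g·√(9e² − 4)·√(9f² − 4)) < (e·√(9f² − 4) + f·√(9e² − 4))/2. -/
/-- Integer lemma: if `(e,f,g)` is Markoff with `e < f`, `f < g`, then `3ef < 2g`. -/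
lemma markoff_key_int (e f g : ℤ) (he : 0 < e) (hef : e < f) (hfg : f < g)
    (h : e ^ 2 + f ^ 2 + g ^ 2 = 3 * e * f * g) : 3 * e * f < 2 * g := by
  have hf0 : 0 < f := lt_trans he hef
  have h1 : (g - f) * (3 * e * f - f - g) = e ^ 2 + 2 * f ^ 2 - 3 * e * f ^ 2 := by
    linear_combination -h
  have h2 : e ^ 2 + 2 * f ^ 2 - 3 * e * f ^ 2 < 0 := by
    nlinarith [mul_pos he he, mul_pos he hf0, mul_pos hf0 hf0, mul_pos (mul_pos he hf0) hf0]
  have h3 : 3 * e * f - f - g < 0 := by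
    by_contra h4
    push_neg at h4
    have h5 : (0:ℤ) ≤ (g - f) * (3 * e * f - f - g) :=
      mul_nonneg (by linarith) h4
    linarith
  linarith

/-- Real auxiliary lemma, with `u = ef`, `d = 2g - 3ef`, `s = ab`, `t = eb + fa`. -/
lemma markoff_aux (u d s t g : ℝ) (hu : 1 ≤ u) (hd : 0 < d) (hs : 0 < s) (ht : 0 < t)
    (hg : 2 * g = 3 * u + d) (hs2 : s ^ 2 = 9 * d ^ 2 + 16)
    (ht2 : t ^ 2 = 9 * u ^ 2 + d ^ 2 + 2 * u * s) :
    4 * u < (t - 2 * g) * (g * s) := by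
  have hu0 : 0 < u := lt_of_lt_of_le one_pos hu
  have hg0 : 0 < g := by linarith
  have hsd : d < s := by nlinarith
  have hC0 : 0 < 72*d^4 + 432*u*d^3 + 648*u^2*d^2 + 128*d^2 + 672*u*d + 1152*u^2 := by
    nlinarith [pow_pos hd 4, pow_pos hd 2, mul_pos hu0 hd, mul_pos hu0 hu0]
  have hC1 : 0 < 24*d^3 + 144*u*d^2 + 216*u^2*d + 32*u := by
    nlinarith [pow_pos hd 3, mul_pos hu0 hd, mul_pos (mul_pos hu0 hu0) hd]
  -- F = C0^2 - C1^2 * (9d^2+16) > 0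
  have hu2 : (0:ℝ) ≤ u^2 * (u^2 - 1) := mul_nonneg (sq_nonneg u) (by nlinarith)
  have hF : (24*d^3 + 144*u*d^2 + 216*u^2*d + 32*u)^2 * s^2
      < (72*d^4 + 432*u*d^3 + 648*u^2*d^2 + 128*d^2 + 672*u*d + 1152*u^2)^2 := by
    rw [hs2]
    nlinarith [hu2, pow_pos hd 4, pow_pos hd 6, mul_pos hu0 (pow_pos hd 3),
      mul_pos hu0 (pow_pos hd 5), mul_pos (mul_pos hu0 hu0) (pow_pos hd 2),
      mul_pos (mul_pos hu0 hu0) (pow_pos hd 4),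
      mul_pos (mul_pos (mul_pos hu0 hu0) hu0) hd,
      mul_pos (mul_pos (mul_pos hu0 hu0) hu0) (pow_pos hd 3),
      mul_pos (mul_pos (mul_pos hu0 hu0) (mul_pos hu0 hu0)) (pow_pos hd 2),
      pow_pos hu0 4]
  have hE : (24*d^3 + 144*u*d^2 + 216*u^2*d + 32*u) * s
      < 72*d^4 + 432*u*d^3 + 648*u^2*d^2 + 128*d^2 + 672*u*d + 1152*u^2 := by
    nlinarith [hF, mul_pos hC1 hs, hC0]
  -- key squared inequality
  have hEq : (6*g*(s - d))^2 - ((s + 3*d)*t)^2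
      = (72*d^4 + 432*u*d^3 + 648*u^2*d^2 + 128*d^2 + 672*u*d + 1152*u^2)
        - (24*d^3 + 144*u*d^2 + 216*u^2*d + 32*u) * s := by
    linear_combination (9*(s-d)^2*(2*g+3*u+d)) * hg - (s+3*d)^2 * ht2
      + (8*d^2 - 2*u*s + 42*u*d + 72*u^2) * hs2
  have hsq : ((s + 3*d)*t)^2 < (6*g*(s - d))^2 := by linarith [hEq, hE]
  have hY : (0:ℝ) < 6*g*(s - d) :=
    mul_pos (mul_pos (by norm_num) hg0) (sub_pos.2 hsd)
  have hmain : (s + 3*d) * t < 6*g*(s - d) := lt_of_pow_lt_pow_left₀ 2 hY.le hsq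
  have h8 : (t + 2*g) * (s + 3*d) < 8*g*s := by
    have hx : 8*g*s - (t + 2*g) * (s + 3*d) = 6*g*(s - d) - (s + 3*d)*t := by ring
    linarith [hmain, hx]
  have hID : (t - 2*g) * ((t + 2*g) * (s + 3*d)) = 32 * u := by
    linear_combination (s+3*d) * ht2 - ((2*g+3*u+d)*(s+3*d)) * hg + (2*u) * hs2
  have hQ : 0 < (t + 2*g) * (s + 3*d) :=
    mul_pos (by linarith) (by linarith)
  have h11 : (t - 2*g) * (g*s) * ((t + 2*g) * (s + 3*d)) = 32 * u * (g*s) := by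
    linear_combination (g*s) * hID
  have h10 : 4*u * ((t + 2*g) * (s + 3*d)) < (t - 2*g) * (g*s) * ((t + 2*g) * (s + 3*d)) := by
    have hint := mul_lt_mul_of_pos_left h8 (show (0:ℝ) < 4*u by linarith)
    linarith [hint, h11]
  exact lt_of_mul_lt_mul_right h10 hQ.le

/-- For every regular Markoff triple `(e, g, f)`:
`g + 2ef/(g·√(9e²-4)·√(9f²-4)) < (e·√(9f²-4) + f·√(9e²-4))/2`. -/
theorem markoff_delta_lower (e g f : ℤ)
    (he : 0 < e) (hf : 0 < f) (heg : e < g) (hfg : f < g) (hef : e ≠ f)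
    (h : e ^ 2 + f ^ 2 + g ^ 2 = 3 * e * f * g) :
    (g : ℝ) + 2 * (e : ℝ) * f /
        ((g : ℝ) * Real.sqrt (9 * (e : ℝ) ^ 2 - 4) * Real.sqrt (9 * (f : ℝ) ^ 2 - 4))
      < ((e : ℝ) * Real.sqrt (9 * (f : ℝ) ^ 2 - 4)
          + (f : ℝ) * Real.sqrt (9 * (e : ℝ) ^ 2 - 4)) / 2 := by
  -- integer fact: 3ef < 2g
  have hkey : 3 * e * f < 2 * g := by
    rcases lt_or_gt_of_ne hef with h' | h'
    · exact markoff_key_int e f g he h' hfg h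
    · have h2 : f ^ 2 + e ^ 2 + g ^ 2 = 3 * f * e * g := by ring_nf; ring_nf at h; linarith
      have := markoff_key_int f e g hf h' heg h2
      linarith
  -- casts
  have he1 : (1:ℝ) ≤ (e:ℝ) := by exact_mod_cast he
  have hf1 : (1:ℝ) ≤ (f:ℝ) := by exact_mod_cast hf
  have hg1 : (1:ℝ) ≤ (g:ℝ) := by
    have : (1:ℤ) ≤ g := by linarith
    exact_mod_cast this
  have hg0 : (0:ℝ) < (g:ℝ) := lt_of_lt_of_le one_pos hg1
  have hgR : (e:ℝ)^2 + (f:ℝ)^2 + (g:ℝ)^2 = 3 * (e:ℝ) * (f:ℝ) * (g:ℝ) := by exact_mod_cast h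
  have hd : (0:ℝ) < 2*(g:ℝ) - 3*(e:ℝ)*(f:ℝ) := by
    have : (3:ℝ) * e * f < 2 * g := by exact_mod_cast hkey
    linarith
  set a := Real.sqrt (9 * (e : ℝ) ^ 2 - 4) with ha_def
  set b := Real.sqrt (9 * (f : ℝ) ^ 2 - 4) with hb_def
  have hae : (0:ℝ) ≤ 9 * (e:ℝ)^2 - 4 := by nlinarith
  have hbe : (0:ℝ) ≤ 9 * (f:ℝ)^2 - 4 := by nlinarith
  have ha2 : a^2 = 9 * (e:ℝ)^2 - 4 := Real.sq_sqrt hae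
  have hb2 : b^2 = 9 * (f:ℝ)^2 - 4 := Real.sq_sqrt hbe
  have ha : 0 < a := Real.sqrt_pos.mpr (by nlinarith)
  have hb : 0 < b := Real.sqrt_pos.mpr (by nlinarith)
  have hd2 : (2*(g:ℝ) - 3*e*f)^2 = 9*(e:ℝ)^2*(f:ℝ)^2 - 4*(e:ℝ)^2 - 4*(f:ℝ)^2 := by
    linear_combination 4 * hgR
  have hs2 : (a*b)^2 = 9*(2*(g:ℝ) - 3*e*f)^2 + 16 := by
    linear_combination (b^2) * ha2 + (9*(e:ℝ)^2 - 4) * hb2 - 9 * hd2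
  have ht2 : ((e:ℝ)*b + f*a)^2 = 9*((e:ℝ)*f)^2 + (2*(g:ℝ) - 3*e*f)^2 + 2*((e:ℝ)*f)*(a*b) := by
    linear_combination ((e:ℝ)^2) * hb2 + ((f:ℝ)^2) * ha2 - hd2
  have hu : (1:ℝ) ≤ (e:ℝ)*f := by nlinarith
  have hs0 : 0 < a*b := mul_pos ha hb
  have ht0 : 0 < (e:ℝ)*b + f*a :=
    add_pos (mul_pos (lt_of_lt_of_le one_pos he1) hb) (mul_pos (lt_of_lt_of_le one_pos hf1) ha)
  have key := markoff_aux ((e:ℝ)*f) (2*(g:ℝ) - 3*e*f) (a*b) ((e:ℝ)*b + f*a) (g:ℝ)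
    hu hd hs0 ht0 (by ring) hs2 ht2
  have hgab : (0:ℝ) < (g:ℝ) * a * b := mul_pos (mul_pos hg0 ha) hb
  have hdiv : 2 * (e:ℝ) * f / ((g:ℝ) * a * b) < ((e:ℝ)*b + f*a) / 2 - g := by
    rw [div_lt_iff₀ hgab]
    linarith [key]
  linarith [hdiv]
end

section
/- For a Markoff triple of the form (1, F_{2n+1}, F_{2n−1}) with n ≥ 2 (F_i Fibonacci numbers), the weights are (0, F_{2n−1}, F_{2n−3}) and the coweights are (1, F_{2n−3}, F_{2n−5}). -/
/-!
Since `e = 1`, the weight `r_e` is `0`, and `r_g ≡ f (mod g)` with `0 ≤ f < g` forces `r_g = f`.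
Catalan's identity at odd index, `F_{k+2}² + 1 = F_k F_{k+4}`, gives `f² + 1 = F_{2n-3} g`, so
`F_{2n-3}` is the inverse of `g` modulo `f`; as `0 ≤ F_{2n-3} < f`, it is the weight `r_f`.
The same identity, read with integer-indexed Fibonacci numbers (`F_{-1} = 1`), yields the
coweights after cancelling `g` resp. `f`.
-/

namespace Int

theorem eq_of_dvd_sub_of_nonneg_of_lt {m a b : ℤ} (ha0 : 0 ≤ a) (ha : a < m) (hb0 : 0 ≤ b)
    (hb : b < m) (h : m ∣ a - b) : a = b :=
  sub_eq_zero.mp <| eq_zero_of_abs_lt_dvd h <| abs_sub_lt_iff.mpr ⟨by omega, by omega⟩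

theorem eq_of_dvd_mul_sub_one {m g a b : ℤ} (ha0 : 0 ≤ a) (ha : a < m) (hb0 : 0 ≤ b)
    (hb : b < m) (hga : m ∣ g * a - 1) (hgb : m ∣ g * b - 1) : a = b := by
  obtain ⟨c, hc⟩ := hgb
  have hcop : IsCoprime m g := ⟨-c, b, by linear_combination hc⟩
  have hdvd : m ∣ g * (a - b) := by
    simpa only [mul_sub, sub_sub_sub_cancel_right] using dvd_sub hga ⟨c, hc⟩
  exact eq_of_dvd_sub_of_nonneg_of_lt ha0 ha hb0 hb (hcop.dvd_of_dvd_mul_left hdvd)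

theorem fib_add_two_sq_add_one {x : ℤ} (hx : Odd x) :
    fib (x + 2) ^ 2 + 1 = fib x * fib (x + 4) := by
  have h := fib_add_sq_sub_fib_mul_fib_add_two_mul x 2
  rw [hx.natAbs.neg_one_pow, fib_two, show x + 2 * 2 = x + 4 by ring] at h
  linear_combination h

theorem fib_nonneg {x : ℤ} (hx : 0 ≤ x) : 0 ≤ fib x := by
  rw [fib_of_nonneg hx]; positivity

theorem fib_lt_fib_add_two {x : ℤ} (hx : 0 ≤ x) : fib x < fib (x + 2) := by
  have : 0 < fib (x + 1) := by
    rw [fib_of_nonneg (by omega), Nat.cast_pos, Nat.fib_pos]; omega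
  linarith [fib_add_two x]

end Int

theorem markoff_fibonacci_weights_general (n : ℕ) (hn : 2 ≤ n)
    (e g f r_e r_g r_f s_e s_g s_f : ℤ)
    (he : e = 1) (hg : g = Nat.fib (2 * n + 1)) (hf : f = Nat.fib (2 * n - 1))
    (hre0 : 0 ≤ r_e) (hre1 : r_e < e)
    (hrf0 : 0 ≤ r_f) (hrf1 : r_f < f) (hrf : f ∣ g * r_f - e)
    (hrg0 : 0 ≤ r_g) (hrg1 : r_g < g) (hrg : g ∣ e * r_g - f)
    (hse : r_e ^ 2 = -1 + s_e * e)
    (hsf : r_f ^ 2 = -1 + s_f * f)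
    (hsg : r_g ^ 2 = -1 + s_g * g) :
    r_e = 0 ∧ r_g = Nat.fib (2 * n - 1) ∧ r_f = Nat.fib (2 * n - 3) ∧
      s_e = 1 ∧ s_g = Nat.fib (2 * n - 3) ∧
      s_f = (Nat.fib (2 * n - 3) : ℤ) - Nat.fib (2 * n - 4) := by
  subst he
  set x : ℤ := 2 * n - 3
  have hx : Odd x := ⟨n - 2, by omega⟩
  have fib_cast (k : ℕ) (y : ℤ) (hy : (k : ℤ) = y) : (Nat.fib k : ℤ) = Int.fib y := hy ▸ rfl
  have hF : (Nat.fib (2 * n - 3) : ℤ) - Nat.fib (2 * n - 4) = Int.fib (x - 2) := by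
    rw [Int.fib_eq_fib_add_two_sub_fib_add_one, sub_add_cancel,
      fib_cast _ x (by omega), fib_cast _ (x - 2 + 1) (by omega)]
  rw [fib_cast (2 * n + 1) (x + 4) (by omega)] at hg
  rw [fib_cast (2 * n - 1) (x + 2) (by omega)] at hf ⊢
  rw [hF, fib_cast (2 * n - 3) x (by omega)]
  subst hg hf
  have hfib_x : 0 ≤ Int.fib x := Int.fib_nonneg (by omega)
  have hfx : Int.fib x < Int.fib (x + 2) := Int.fib_lt_fib_add_two (by omega)
  have hgf : Int.fib (x + 2) < Int.fib (x + 4) := by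
    simpa only [add_assoc, Int.reduceAdd] using Int.fib_lt_fib_add_two (x := x + 2) (by omega)
  have catalan_x := Int.fib_add_two_sq_add_one hx
  have catalan_x_sub_two : Int.fib x ^ 2 + 1 = Int.fib (x - 2) * Int.fib (x + 2) := by
    have h := Int.fib_add_two_sq_add_one (hx.sub_even even_two)
    rwa [sub_add_cancel, show x - 2 + 4 = x + 2 by ring] at h
  have hr_e : r_e = 0 := by omega
  have hr_g : r_g = Int.fib (x + 2) :=
    Int.eq_of_dvd_sub_of_nonneg_of_lt hrg0 hrg1 (by omega) (by linarith) (by simpa using hrg)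
  have hr_f : r_f = Int.fib x := Int.eq_of_dvd_mul_sub_one hrf0 hrf1 hfib_x hfx hrf
    ⟨Int.fib (x + 2), by linear_combination -catalan_x⟩
  refine ⟨hr_e, hr_g, hr_f, by linear_combination -hse + r_e * hr_e, ?_, ?_⟩
  · rw [hr_g] at hsg
    exact mul_right_cancel₀ (by omega : Int.fib (x + 4) ≠ 0)
      (by linear_combination catalan_x - hsg)
  · rw [hr_f] at hsf
    exact mul_right_cancel₀ (by omega : Int.fib (x + 2) ≠ 0)
      (by linear_combination catalan_x_sub_two - hsf)

/-- For a Markoff triple `(1, F_{2n+1}, F_{2n-1})` with `n ≥ 2`, the weights are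
`(0, F_{2n-1}, F_{2n-3})` and the coweights are `(1, F_{2n-3}, F_{2n-5})`
(for `n = 2` we interpret `F_{-1} = F_{2n-3} - F_{2n-4} = 1`). -/
theorem markoff_fibonacci_weights (n : ℕ) (hn : 2 ≤ n)
    (e g f r_e r_g r_f s_e s_g s_f : ℤ)
    (he : e = 1) (hg : g = Nat.fib (2 * n + 1)) (hf : f = Nat.fib (2 * n - 1))
    (hre0 : 0 ≤ r_e) (hre1 : r_e < e) (hre : e ∣ f * r_e - g)
    (hrf0 : 0 ≤ r_f) (hrf1 : r_f < f) (hrf : f ∣ g * r_f - e)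
    (hrg0 : 0 ≤ r_g) (hrg1 : r_g < g) (hrg : g ∣ e * r_g - f)
    (hse : r_e ^ 2 = -1 + s_e * e)
    (hsf : r_f ^ 2 = -1 + s_f * f)
    (hsg : r_g ^ 2 = -1 + s_g * g) :
    r_e = 0 ∧ r_g = Nat.fib (2 * n - 1) ∧ r_f = Nat.fib (2 * n - 3) ∧
      s_e = 1 ∧ s_g = Nat.fib (2 * n - 3) ∧
      s_f = (Nat.fib (2 * n - 3) : ℤ) - Nat.fib (2 * n - 4) :=
  markoff_fibonacci_weights_general n hn e g f r_e r_g r_f s_e s_g s_f he hg hf hre0 hre1 hrf0 hrf1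
    hrf hrg0 hrg1 hrg hse hsf hsg
end

section
/- For a Markoff triple of the form (P_{2n−1}, P_{2n+1}, 2) with n ≥ 1 (P_i Pell numbers), the weights are (P_{2n−2}, P_{2n}, 1). -/
/-- Pell numbers: `P 0 = 0`, `P 1 = 1`, `P (n+2) = 2 P (n+1) + P n`. -/
def pell : ℕ → ℤ
  | 0 => 0
  | 1 => 1
  | n + 2 => 2 * pell (n + 1) + pell n

lemma pell_step (k : ℕ) : pell (k + 2) = 2 * pell (k + 1) + pell k := rfl

lemma pell_nonneg_lt (k : ℕ) : 0 ≤ pell k ∧ pell k < pell (k + 1) := by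
  induction k with
  | zero => norm_num [pell]
  | succ k ih =>
    obtain ⟨h1, h2⟩ := ih
    refine ⟨by linarith, ?_⟩
    show pell (k + 1) < pell (k + 2)
    rw [pell_step]
    linarith

lemma pell_nonneg (k : ℕ) : 0 ≤ pell k := (pell_nonneg_lt k).1

lemma pell_lt (k : ℕ) : pell k < pell (k + 1) := (pell_nonneg_lt k).2

lemma pell_odd (k : ℕ) : Odd (pell (2 * k + 1)) := by
  induction k with
  | zero => exact ⟨0, rfl⟩
  | succ k ih =>
    obtain ⟨c, hc⟩ := ih
    refine ⟨pell (2 * k + 2) + c, ?_⟩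
    have h1 : pell (2 * k + 3) = 2 * pell (2 * k + 2) + pell (2 * k + 1) := rfl
    rw [show 2 * (k + 1) + 1 = 2 * k + 3 by ring, h1]
    omega

lemma pell_id (k : ℕ) : pell (k + 2) * pell k + (-1 : ℤ) ^ k = pell (k + 1) ^ 2 := by
  induction k with
  | zero => norm_num [pell]
  | succ k ih =>
    show pell (k + 3) * pell (k + 1) + (-1 : ℤ) ^ (k + 1) = pell (k + 2) ^ 2
    have h1 : pell (k + 3) = 2 * pell (k + 2) + pell (k + 1) := pell_step (k + 1)
    have h2 : pell (k + 2) = 2 * pell (k + 1) + pell k := pell_step k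
    have h3 : (-1 : ℤ) ^ (k + 1) = -(-1 : ℤ) ^ k := by ring
    rw [h1, h3]
    linear_combination (-1 : ℤ) * ih - pell (k + 2) * h2

lemma dvd_small (d x : ℤ) (h : d ∣ x) (h1 : -d < x) (h2 : x < d) : x = 0 := by
  rcases h with ⟨t, rfl⟩
  have hd : 0 < d := by linarith
  rcases lt_trichotomy t 0 with ht | ht | ht
  · nlinarith
  · simp [ht]
  · nlinarith

lemma odd_dvd_cancel_two (d x : ℤ) (hd : Odd d) (h : d ∣ 2 * x) : d ∣ x := by
  obtain ⟨j, hj⟩ := hd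
  have hx : x = d * x - j * (2 * x) := by rw [hj]; ring
  rw [hx]
  exact dvd_sub (dvd_mul_right d x) (h.mul_left j)

/-- For a Markoff triple `(P_{2n-1}, P_{2n+1}, 2)` with `n ≥ 1`, the weights
are `(P_{2n-2}, P_{2n}, 1)`. -/
theorem markoff_pell_weights (n : ℕ) (hn : 1 ≤ n)
    (e g f r_e r_g r_f : ℤ)
    (he : e = pell (2 * n - 1)) (hg : g = pell (2 * n + 1)) (hf : f = 2)
    (hre0 : 0 ≤ r_e) (hre1 : r_e < e) (hre : e ∣ f * r_e - g)
    (hrf0 : 0 ≤ r_f) (hrf1 : r_f < f) (hrf : f ∣ g * r_f - e)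
    (hrg0 : 0 ≤ r_g) (hrg1 : r_g < g) (hrg : g ∣ e * r_g - f) :
    r_e = pell (2 * n - 2) ∧ r_g = pell (2 * n) ∧ r_f = 1 := by
  obtain ⟨m, rfl⟩ : ∃ m, n = m + 1 := ⟨n - 1, by omega⟩
  rw [show 2 * (m + 1) - 2 = 2 * m by omega, show 2 * (m + 1) = 2 * m + 2 by omega]
  rw [show 2 * (m + 1) - 1 = 2 * m + 1 by omega] at he
  rw [show 2 * (m + 1) + 1 = 2 * m + 3 by omega] at hg
  subst he hg hf
  set a := pell (2 * m) with ha
  set b := pell (2 * m + 1) with hb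
  set c := pell (2 * m + 2) with hc
  set d := pell (2 * m + 3) with hd
  have hcb : c = 2 * b + a := pell_step (2 * m)
  have hdc : d = 2 * c + b := pell_step (2 * m + 1)
  have hb_odd : Odd b := pell_odd m
  have hd_odd : Odd d := by
    have := pell_odd (m + 1)
    rwa [show 2 * (m + 1) + 1 = 2 * m + 3 by ring] at this
  have hid : d * b = c ^ 2 + 1 := by
    have h := pell_id (2 * m + 1)
    rw [show 2 * m + 1 + 2 = 2 * m + 3 from rfl, show 2 * m + 1 + 1 = 2 * m + 2 from rfl,
      Odd.neg_one_pow ⟨m, by ring⟩] at h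
    linarith
  have ha0 : 0 ≤ a := pell_nonneg _
  have hab : a < b := pell_lt (2 * m)
  have hcd : c < d := pell_lt (2 * m + 2)
  have hc0 : 0 ≤ c := pell_nonneg _
  have hb0 : 0 < b := by linarith
  have hd0 : 0 < d := by linarith
  -- r_e
  have h1 : b ∣ 2 * (r_e - a) := by
    have h5 : 2 * r_e - d + b * 5 = 2 * (r_e - a) := by rw [hdc, hcb]; ring
    have := dvd_add hre (Dvd.intro 5 rfl)
    rwa [h5] at this
  have h2 : b ∣ r_e - a := odd_dvd_cancel_two _ _ hb_odd h1
  have hre_eq : r_e = a := by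
    have := dvd_small b (r_e - a) h2 (by linarith) (by linarith)
    linarith
  -- r_g
  have hkey : b * c - 2 = d * (c - 2 * b) := by
    have hbe : b = d - 2 * c := by linarith
    nlinarith [hid, hbe]
  have h3 : d ∣ b * (r_g - c) := by
    have heq : b * (r_g - c) = (b * r_g - 2) - (b * c - 2) := by ring
    rw [heq, hkey]
    exact dvd_sub hrg (Dvd.intro _ rfl)
  have h4 : d ∣ 2 * (r_g - c) := by
    have heq : 2 * (r_g - c) = c * (b * (r_g - c)) - (b * c - 2) * (r_g - c) := by ring
    rw [heq, hkey]
    exact dvd_sub (h3.mul_left c) (Dvd.dvd.mul_right ⟨_, rfl⟩ _)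
  have h6 : d ∣ r_g - c := odd_dvd_cancel_two _ _ hd_odd h4
  have hrg_eq : r_g = c := by
    have := dvd_small d (r_g - c) h6 (by linarith) (by linarith)
    linarith
  -- r_f
  have hrf_eq : r_f = 1 := by
    obtain ⟨j, hj⟩ := hb_odd
    obtain ⟨i, hi⟩ := hd_odd
    interval_cases r_f
    · exfalso
      obtain ⟨t, ht⟩ := hrf
      omega
    · rfl
  exact ⟨hre_eq, hrg_eq, hrf_eq⟩
end

section
/- Let n > k > 0 be coprime with k < n − k, and suppose n/k has continued fraction expansion [c_1, …, c_s] with c_1, c_s > 1. Then n²/(nk − 1) = [c_1, …, c_{s−1}, c_s − 1, c_s + 1, c_{s−1}, …, c_1] if s is even, and n²/(nk − 1) = [c_1, …, c_{s−1}, c_s + 1, c_s − 1, c_{s−1}, …, c_1] if s is odd. -/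
/-- Value of a finite regular continued fraction `[a_1, …, a_t]`. -/
def cfVal : List ℤ → ℚ
  | [] => 0
  | [a] => (a : ℚ)
  | a :: b :: l => (a : ℚ) + 1 / cfVal (b :: l)

/-!
Write `M l` for the product of the matrices `!![a, 1; 1, 0]` over `a ∈ l`. For positive entries the
first column of `M l` is the numerator and denominator of `cfVal l`, and they are coprime since
`det (M l) = ±1`; hence `(n, k)` is the first column of `M (L ++ [t])`, where `c = L ++ [t]`.
For `ε = ±1` the palindrome `L ++ [t - ε, t + ε] ++ L.reverse` has matrix
`M L * !![t², t - ε; t + ε, 1] * (M L)ᵀ`, whose first column is `(n², nk + ε det (M L))`, and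
`det (M L) = (-1) ^ (s - 1)`.
-/

open Matrix

def cfMat (l : List ℤ) : Matrix (Fin 2) (Fin 2) ℤ :=
  (l.map fun a => !![a, 1; 1, 0]).prod

lemma cfMat_nil : cfMat [] = 1 := rfl

lemma cfMat_cons (a : ℤ) (l : List ℤ) :
    cfMat (a :: l) = !![a * cfMat l 0 0 + cfMat l 1 0, a * cfMat l 0 1 + cfMat l 1 1;
      cfMat l 0 0, cfMat l 0 1] := by
  rw [cfMat, List.map_cons, List.prod_cons, ← cfMat, eta_fin_two (cfMat l), mul_fin_two]
  simp

lemma cfMat_append (l m : List ℤ) : cfMat (l ++ m) = cfMat l * cfMat m := by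
  simp [cfMat]

lemma cfMat_reverse (l : List ℤ) : cfMat l.reverse = (cfMat l)ᵀ := by
  rw [cfMat, cfMat, transpose_list_prod, List.map_reverse, List.map_map]
  congr 3
  funext a
  ext i j; fin_cases i <;> fin_cases j <;> rfl

lemma det_cfMat (l : List ℤ) : (cfMat l).det = (-1) ^ l.length := by
  rw [cfMat, ← coe_detMonoidHom, map_list_prod, List.map_map]
  simp [Function.comp_def, det_fin_two_of]

lemma isCoprime_cfMat (l : List ℤ) : IsCoprime (cfMat l 0 0) (cfMat l 1 0) := by
  have hdet := det_cfMat l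
  have hsq : ((-1 : ℤ) ^ l.length) ^ 2 = 1 := by rw [← pow_mul, mul_comm, pow_mul]; norm_num
  rw [det_fin_two] at hdet
  exact ⟨(-1) ^ l.length * cfMat l 1 1, -((-1) ^ l.length * cfMat l 0 1), by
    linear_combination (-1) ^ l.length * hdet + hsq⟩

section Positive

variable {l : List ℤ}

lemma cfMat_nonneg (hl : ∀ x ∈ l, 0 < x) : ∀ i j, 0 ≤ cfMat l i j := by
  induction l with
  | nil => intro i j; fin_cases i <;> fin_cases j <;> simp [cfMat_nil]
  | cons a l ih =>
    have ha := hl a List.mem_cons_self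
    have hM := ih fun x hx => hl x (List.mem_cons_of_mem a hx)
    have := hM 0 0; have := hM 0 1; have := hM 1 0; have := hM 1 1
    intro i j
    fin_cases i <;> fin_cases j <;> simp only [Fin.zero_eta, Fin.mk_one, Fin.isValue, cfMat_cons, of_apply, cons_val',
        cons_val_zero, cons_val_one, cons_val_fin_one] <;> positivity

lemma cfMat_zero_zero_pos (hl : ∀ x ∈ l, 0 < x) : 0 < cfMat l 0 0 := by
  induction l with
  | nil => simp [cfMat_nil]
  | cons a l ih =>
    have hl' : ∀ x ∈ l, 0 < x := fun x hx => hl x (List.mem_cons_of_mem a hx)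
    have := cfMat_nonneg hl' 1 0
    have := mul_pos (hl a List.mem_cons_self) (ih hl')
    simp only [cfMat_cons, of_apply, cons_val', cons_val_zero, empty_val', cons_val_fin_one]
    linarith

lemma cfMat_one_zero_pos (hl : ∀ x ∈ l, 0 < x) (hne : l ≠ []) : 0 < cfMat l 1 0 := by
  obtain ⟨a, l, rfl⟩ := List.exists_cons_of_ne_nil hne
  simpa [cfMat_cons] using cfMat_zero_zero_pos fun x hx => hl x (List.mem_cons_of_mem a hx)

lemma cfVal_eq_div (hl : ∀ x ∈ l, 0 < x) : cfVal l = cfMat l 0 0 / cfMat l 1 0 := by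
  induction l with
  | nil => simp [cfVal, cfMat_nil]
  | cons a l ih =>
    cases l with
    | nil => simp [cfVal, cfMat_cons, cfMat_nil]
    | cons b l =>
      have hl' : ∀ x ∈ b :: l, 0 < x := fun x hx => hl x (List.mem_cons_of_mem a hx)
      have hpos : (0 : ℚ) < cfMat (b :: l) 0 0 := by exact_mod_cast cfMat_zero_zero_pos hl'
      rw [cfVal, ih hl', cfMat_cons (a := a)]
      simp only [of_apply, cons_val', cons_val_zero, cons_val_one, cons_val_fin_one, Int.cast_add,
        Int.cast_mul]
      field_simp

end Positive

lemma cfMat_palindrome (L : List ℤ) (t ε : ℤ) (hε : ε ^ 2 = 1) :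
    cfMat (L ++ [t - ε, t + ε] ++ L.reverse) 0 0 = cfMat (L ++ [t]) 0 0 ^ 2 ∧
    cfMat (L ++ [t - ε, t + ε] ++ L.reverse) 1 0 =
      cfMat (L ++ [t]) 0 0 * cfMat (L ++ [t]) 1 0 + ε * (cfMat L).det := by
  simp only [cfMat_append, cfMat_reverse, cfMat_cons, cfMat_nil, det_fin_two]
  simp only [mul_apply, Fin.sum_univ_two, transpose_apply, one_apply_eq, one_apply_ne, of_apply,
    cons_val', cons_val_zero, cons_val_one, cons_val_fin_one, ne_eq, one_ne_zero, zero_ne_one,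
    not_false_eq_true, mul_one, mul_zero, add_zero, zero_add]
  exact ⟨by linear_combination -cfMat L 0 0 ^ 2 * hε,
    by linear_combination -cfMat L 0 0 * cfMat L 1 0 * hε⟩

lemma cfVal_palindrome {L : List ℤ} {t ε : ℤ} (hL : ∀ x ∈ L, 0 < x) (ht : 1 < t)
    (hε : ε = 1 ∨ ε = -1) :
    cfVal (L ++ [t - ε, t + ε] ++ L.reverse) = (cfMat (L ++ [t]) 0 0 ^ 2 : ℚ) /
      (cfMat (L ++ [t]) 0 0 * cfMat (L ++ [t]) 1 0 + ε * (cfMat L).det) := by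
  have hpos : ∀ x ∈ L ++ [t - ε, t + ε] ++ L.reverse, 0 < x := by
    intro x hx
    simp only [List.mem_append, List.mem_reverse, List.mem_cons, List.not_mem_nil, or_false] at hx
    rcases hx with (hx | rfl | rfl) | hx <;> first | exact hL x hx | omega
  have hε2 : ε ^ 2 = 1 := by rcases hε with rfl | rfl <;> norm_num
  obtain ⟨h00, h10⟩ := cfMat_palindrome L t ε hε2
  rw [cfVal_eq_div hpos, h00, h10]
  push_cast
  rfl

theorem tsing_cf_palindrome_general (n k : ℤ) (hk : 0 < k)
    (hcop : IsCoprime n k) (c : List ℤ) (hne : c ≠ [])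
    (hpos : ∀ x ∈ c, 0 < x) (hlast : 1 < c.getLast!)
    (hcf : (n : ℚ) / k = cfVal c) :
    (Even c.length →
      (n ^ 2 : ℚ) / (n * k - 1) =
        cfVal (c.dropLast ++ [c.getLast! - 1, c.getLast! + 1] ++ c.dropLast.reverse)) ∧
    (Odd c.length →
      (n ^ 2 : ℚ) / (n * k - 1) =
        cfVal (c.dropLast ++ [c.getLast! + 1, c.getLast! - 1] ++ c.dropLast.reverse)) := by
  obtain ⟨L, t, rfl⟩ := (List.eq_nil_or_concat' c).resolve_left hne
  have hL : ∀ x ∈ L, 0 < x := fun x hx => hpos x (List.mem_append_left _ hx)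
  simp only [List.getLast!_eq_getLast?_getD, List.getLast?_concat, Option.getD_some,
    List.dropLast_concat, List.length_append, List.length_singleton] at hlast ⊢
  obtain ⟨rfl, rfl⟩ := Rat.div_int_inj hk (cfMat_one_zero_pos hpos hne)
    (Int.isCoprime_iff_nat_coprime.mp hcop) (Int.isCoprime_iff_nat_coprime.mp (isCoprime_cfMat _))
    (hcf.trans (cfVal_eq_div hpos))
  refine ⟨fun hev => ?_, fun hodd => ?_⟩
  · rw [cfVal_palindrome hL hlast (.inl rfl), det_cfMat, (?_ : Odd L.length).neg_one_pow]
    · push_cast; ring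
    · simpa [Nat.even_add_one] using hev
  · have := cfVal_palindrome hL hlast (.inr rfl)
    rw [sub_neg_eq_add, ← sub_eq_add_neg] at this
    rw [this, det_cfMat, (?_ : Even L.length).neg_one_pow]
    · push_cast; ring
    · simpa [Nat.odd_add_one] using hodd

/-- If `n/k = [c_1, …, c_s]` with `c_1, c_s > 1`, `gcd(n,k) = 1`, `0 < k < n - k`,
then `n²/(nk-1) = [c_1, …, c_{s-1}, c_s - 1, c_s + 1, c_{s-1}, …, c_1]` for `s`
even, and `n²/(nk-1) = [c_1, …, c_{s-1}, c_s + 1, c_s - 1, c_{s-1}, …, c_1]`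
for `s` odd. -/
theorem tsing_cf_palindrome (n k : ℤ) (hk : 0 < k) (hkn : k < n - k)
    (hcop : IsCoprime n k) (c : List ℤ) (hne : c ≠ [])
    (hpos : ∀ x ∈ c, 0 < x) (hhead : 1 < c.head!) (hlast : 1 < c.getLast!)
    (hcf : (n : ℚ) / k = cfVal c) :
    (Even c.length →
      (n ^ 2 : ℚ) / (n * k - 1) =
        cfVal (c.dropLast ++ [c.getLast! - 1, c.getLast! + 1] ++ c.dropLast.reverse)) ∧
    (Odd c.length →
      (n ^ 2 : ℚ) / (n * k - 1) =
        cfVal (c.dropLast ++ [c.getLast! + 1, c.getLast! - 1] ++ c.dropLast.reverse)) :=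
  tsing_cf_palindrome_general n k hk hcop c hne hpos hlast hcf
end

section
/- Let n > k > 0 be coprime with k < n − k, and write n²/(nk − 1) = [a_1, …, a_t] as a regular continued fraction with a_t > 1. Then t is even, say t = 2s, and n²/(nk + 1) = [a_{2s}, …, a_1]. -/
/-!
Let `p/q = [a_1, …, a_t]` in lowest terms. The continuant matrix
`∏ !![a_i, 1; 1, 0] = !![p, p'; q, q']` has determinant `(-1)^t` and its transpose is the
matrix of the reversed expansion, so `[a_t, …, a_1] = p/p'` with `p' q ≡ (-1)^(t+1) mod p`.
For `p/q = n²/(nk - 1)` the inverse of `q` modulo `n²` is `n(n - k) - 1 ≡ -(nk + 1)`, and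
`0 ≤ p' < p`, so `p' = nk + 1` if `t` is even and `p' = n(n - k) - 1` if `t` is odd.
The odd case is impossible: `a_t ≥ 2` forces `2p' ≤ p`, while `2(n(n - k) - 1) > n²`
as `n > 2k`.
-/

open Matrix

/-- `cfMatrix a = !![p, p'; q, q']` where `p/q = [a_1, …, a_t]` and
`p'/q' = [a_1, …, a_{t-1}]`. -/
def cfMatrix (a : List ℤ) : Matrix (Fin 2) (Fin 2) ℤ :=
  (a.map fun x => !![x, 1; 1, 0]).prod

def cfNum (a : List ℤ) : ℤ := cfMatrix a 0 0

def cfDen (a : List ℤ) : ℤ := cfMatrix a 1 0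

@[simp] lemma cfMatrix_nil : cfMatrix [] = 1 := rfl

lemma cfMatrix_cons (x : ℤ) (l : List ℤ) : cfMatrix (x :: l) = !![x, 1; 1, 0] * cfMatrix l := by
  simp [cfMatrix]

@[simp] lemma cfNum_nil : cfNum [] = 1 := rfl

@[simp] lemma cfDen_nil : cfDen [] = 0 := rfl

lemma cfNum_cons (x : ℤ) (l : List ℤ) : cfNum (x :: l) = x * cfNum l + cfDen l := by
  simp [cfNum, cfDen, cfMatrix_cons, mul_apply, Fin.sum_univ_two]

lemma cfDen_cons (x : ℤ) (l : List ℤ) : cfDen (x :: l) = cfNum l := by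
  simp [cfNum, cfDen, cfMatrix_cons, mul_apply, Fin.sum_univ_two]

lemma det_cfMatrix (a : List ℤ) : (cfMatrix a).det = (-1) ^ a.length := by
  induction a with
  | nil => simp
  | cons x l ih =>
    rw [cfMatrix_cons, det_mul, ih, det_fin_two_of, List.length_cons, pow_succ]
    ring

lemma cfMatrix_reverse (a : List ℤ) : cfMatrix a.reverse = (cfMatrix a)ᵀ := by
  simp only [cfMatrix, transpose_list_prod, List.map_map, List.map_reverse]
  congr 3
  ext x i j
  fin_cases i <;> fin_cases j <;> rfl

lemma cfNum_reverse (a : List ℤ) : cfNum a.reverse = cfNum a := by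
  simp [cfNum, cfMatrix_reverse]

lemma cfMatrix_nonneg {a : List ℤ} (ha : ∀ x ∈ a, 0 ≤ x) (i j : Fin 2) :
    0 ≤ cfMatrix a i j := by
  induction a generalizing i j with
  | nil => simp [one_apply]; split_ifs <;> norm_num
  | cons x l ih =>
    have hx := ha x List.mem_cons_self
    have hl := ih fun y hy => ha y (List.mem_cons_of_mem x hy)
    rw [cfMatrix_cons, mul_apply]
    refine Finset.sum_nonneg fun m _ => mul_nonneg ?_ (hl m j)
    fin_cases i <;> fin_cases m <;> simp [hx]

lemma cfNum_pos {a : List ℤ} (ha : ∀ x ∈ a, 0 < x) : 0 < cfNum a := by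
  induction a with
  | nil => simp [cfNum]
  | cons x l ih =>
    have hl : ∀ y ∈ l, 0 < y := fun y hy => ha y (List.mem_cons_of_mem x hy)
    have hden : 0 ≤ cfDen l := cfMatrix_nonneg (fun y hy => (hl y hy).le) 1 0
    rw [cfNum_cons]
    nlinarith [ha x List.mem_cons_self, ih hl]

lemma cfDen_pos {a : List ℤ} (hne : a ≠ []) (ha : ∀ x ∈ a, 0 < x) : 0 < cfDen a := by
  obtain ⟨x, l, rfl⟩ := List.exists_cons_of_ne_nil hne
  rw [cfDen_cons]
  exact cfNum_pos fun y hy => ha y (List.mem_cons_of_mem x hy)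

lemma cfVal_eq_cfNum_div_cfDen {a : List ℤ} (hne : a ≠ []) (ha : ∀ x ∈ a, 0 < x) :
    cfVal a = cfNum a / cfDen a := by
  induction a with
  | nil => exact absurd rfl hne
  | cons x l ih =>
    rcases l with _ | ⟨y, m⟩
    · simp [cfVal, cfNum_cons, cfDen_cons]
    · have hl : ∀ z ∈ y :: m, 0 < z := fun z hz => ha z (List.mem_cons_of_mem x hz)
      have hnum : (0 : ℚ) < cfNum (y :: m) := by exact_mod_cast cfNum_pos hl
      rw [cfVal, ih (List.cons_ne_nil y m) hl, cfNum_cons x, cfDen_cons x]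
      field_simp
      push_cast
      ring

lemma isCoprime_cfNum_cfDen (a : List ℤ) : IsCoprime (cfNum a) (cfDen a) := by
  have hdet := det_cfMatrix a
  rw [det_fin_two] at hdet
  have hsq : ((-1 : ℤ) ^ a.length) ^ 2 = 1 := by
    rw [← pow_mul, mul_comm, pow_mul, neg_one_sq, one_pow]
  refine ⟨(-1) ^ a.length * cfMatrix a 1 1, -((-1) ^ a.length * cfMatrix a 0 1), ?_⟩
  rw [cfNum, cfDen]
  linear_combination (-1) ^ a.length * hdet + hsq

lemma cfNum_eq_and_cfDen_eq_of_cfVal_eq {a : List ℤ} (hne : a ≠ []) (ha : ∀ x ∈ a, 0 < x)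
    {p q : ℤ} (hp : 0 < p) (hq : 0 < q) (hpq : IsCoprime p q) (h : cfVal a = p / q) :
    cfNum a = p ∧ cfDen a = q := by
  have hden := cfDen_pos hne ha
  rw [cfVal_eq_cfNum_div_cfDen hne ha, div_eq_div_iff (by positivity) (by positivity)] at h
  have hcross : cfNum a * q = p * cfDen a := by exact_mod_cast h
  have hnum : cfNum a = p :=
    Int.dvd_antisymm (cfNum_pos ha).le hp.le
      ((isCoprime_cfNum_cfDen a).dvd_of_dvd_mul_right ⟨q, hcross.symm⟩)
      (hpq.dvd_of_dvd_mul_right ⟨cfDen a, hcross⟩)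
  refine ⟨hnum, ?_⟩
  rw [hnum] at hcross
  exact (mul_left_cancel₀ hp.ne' hcross).symm

lemma two_mul_cfDen_reverse_le_cfNum {a : List ℤ} (hne : a ≠ []) (ha : ∀ x ∈ a, 0 ≤ x)
    (hlast : 1 < a.getLast hne) : 2 * cfDen a.reverse ≤ cfNum a := by
  obtain ⟨l, x, rfl⟩ := (List.eq_nil_or_concat a).resolve_left hne
  simp only [List.concat_eq_append, List.getLast_concat] at hlast ha ⊢
  have hl : ∀ y ∈ l.reverse, 0 ≤ y := fun y hy => ha y (by simp_all)
  have hnum : 0 ≤ cfNum l.reverse := cfMatrix_nonneg hl 0 0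
  have hden : 0 ≤ cfDen l.reverse := cfMatrix_nonneg hl 1 0
  rw [← cfNum_reverse, List.reverse_concat, cfNum_cons, cfDen_cons]
  nlinarith

lemma cfDen_reverse_mul_cfDen_modEq (a : List ℤ) :
    cfDen a.reverse * cfDen a ≡ -(-1) ^ a.length [ZMOD cfNum a] := by
  have hdet := det_cfMatrix a
  rw [det_fin_two] at hdet
  refine Int.modEq_iff_dvd.mpr ⟨-cfMatrix a 1 1, ?_⟩
  simp only [cfDen, cfNum, cfMatrix_reverse, transpose_apply]
  linear_combination hdet

lemma Int.ModEq.cancel_right_of_isCoprime {m a b c : ℤ} (hmc : IsCoprime m c)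
    (h : a * c ≡ b * c [ZMOD m]) : a ≡ b [ZMOD m] := by
  rw [Int.modEq_iff_dvd, ← sub_mul] at h
  exact Int.modEq_iff_dvd.mpr (hmc.dvd_of_dvd_mul_right h)

lemma Int.ModEq.eq_of_lt_of_lt {m a b : ℤ} (h : a ≡ b [ZMOD m]) (ha₀ : 0 ≤ a) (ha : a < m)
    (hb₀ : 0 ≤ b) (hb : b < m) : a = b := by
  rwa [Int.ModEq, Int.emod_eq_of_lt ha₀ ha, Int.emod_eq_of_lt hb₀ hb] at h

lemma isCoprime_sq_mul_sub_one (n k : ℤ) : IsCoprime (n ^ 2) (n * k - 1) :=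
  ⟨-(k * (n - k) - 1), n * (n - k) - 1, by ring⟩

lemma eq_mul_add_one_of_mul_modEq_neg_one {n k r : ℤ} (hk : 0 < k) (hkn : k < n - k)
    (hr₀ : 0 ≤ r) (hr : r < n ^ 2) (h : r * (n * k - 1) ≡ -1 [ZMOD n ^ 2]) :
    r = n * k + 1 := by
  have hn : 0 < n := by omega
  have hinv : (n * k + 1) * (n * k - 1) ≡ -1 [ZMOD n ^ 2] :=
    Int.modEq_iff_dvd.mpr ⟨-k ^ 2, by ring⟩
  exact (Int.ModEq.cancel_right_of_isCoprime (isCoprime_sq_mul_sub_one n k) (h.trans hinv.symm))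
    |>.eq_of_lt_of_lt hr₀ hr (by positivity) (by nlinarith)

lemma eq_mul_sub_sub_one_of_mul_modEq_one {n k r : ℤ} (hk : 0 < k) (hkn : k < n - k)
    (hr₀ : 0 ≤ r) (hr : r < n ^ 2) (h : r * (n * k - 1) ≡ 1 [ZMOD n ^ 2]) :
    r = n * (n - k) - 1 := by
  have hinv : (n * (n - k) - 1) * (n * k - 1) ≡ 1 [ZMOD n ^ 2] :=
    Int.modEq_iff_dvd.mpr ⟨-(k * (n - k) - 1), by ring⟩
  exact (Int.ModEq.cancel_right_of_isCoprime (isCoprime_sq_mul_sub_one n k) (h.trans hinv.symm))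
    |>.eq_of_lt_of_lt hr₀ hr (by nlinarith) (by nlinarith)

theorem tsing_cf_even_reverse_general (n k : ℤ) (hk : 0 < k) (hkn : k < n - k)
    (a : List ℤ) (hne : a ≠ [])
    (hpos : ∀ x ∈ a, 0 < x) (hlast : 1 < a.getLast!)
    (hcf : (n ^ 2 : ℚ) / (n * k - 1) = cfVal a) :
    Even a.length ∧ (n ^ 2 : ℚ) / (n * k + 1) = cfVal a.reverse := by
  have hn : 0 < n := by omega
  have hn2 : 0 < n ^ 2 := by positivity
  have hq : 0 < n * k - 1 := by nlinarith
  obtain ⟨hnum, hden⟩ := cfNum_eq_and_cfDen_eq_of_cfVal_eq hne hpos hn2 hq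
    (isCoprime_sq_mul_sub_one n k) (by rw [← hcf]; push_cast; rfl)
  have hrev_ne : a.reverse ≠ [] := List.reverse_ne_nil_iff.mpr hne
  have hrev_pos : ∀ x ∈ a.reverse, 0 < x := fun x hx => hpos x (List.mem_reverse.mp hx)
  have hr₀ : 0 ≤ cfDen a.reverse := (cfDen_pos hrev_ne hrev_pos).le
  have hr : 2 * cfDen a.reverse ≤ n ^ 2 := hnum ▸ two_mul_cfDen_reverse_le_cfNum hne
    (fun x hx => (hpos x hx).le) (by simpa [List.getLast?_eq_some_getLast hne] using hlast)
  have hmod := cfDen_reverse_mul_cfDen_modEq a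
  rw [hnum, hden] at hmod
  rcases Nat.even_or_odd a.length with heven | hodd
  · rw [heven.neg_one_pow] at hmod
    have hrev_den := eq_mul_add_one_of_mul_modEq_neg_one hk hkn hr₀ (by omega) hmod
    refine ⟨heven, ?_⟩
    rw [cfVal_eq_cfNum_div_cfDen hrev_ne hrev_pos, cfNum_reverse, hnum, hrev_den]
    push_cast
    ring
  · rw [hodd.neg_one_pow, neg_neg] at hmod
    have hrev_den := eq_mul_sub_sub_one_of_mul_modEq_one hk hkn hr₀ (by omega) hmod
    nlinarith

/-- Let `gcd(n,k) = 1`, `0 < k < n - k`, and write `n²/(nk-1) = [a_1, …, a_t]`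
with `a_t > 1`. Then `t` is even and `n²/(nk+1) = [a_t, …, a_1]`. -/
theorem tsing_cf_even_reverse (n k : ℤ) (hk : 0 < k) (hkn : k < n - k)
    (hcop : IsCoprime n k) (a : List ℤ) (hne : a ≠ [])
    (hpos : ∀ x ∈ a, 0 < x) (hlast : 1 < a.getLast!)
    (hcf : (n ^ 2 : ℚ) / (n * k - 1) = cfVal a) :
    Even a.length ∧ (n ^ 2 : ℚ) / (n * k + 1) = cfVal a.reverse :=
  tsing_cf_even_reverse_general n k hk hkn a hne hpos hlast hcf
end
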